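/- arXiv:1803.01665 — 2 statements merged into one kernel-verified Lean document; each statement's English description precedes it below -/
import Mathlib

section
/- Either V⁻(z) > −∞ holds for all z ∈ ℝⁿ orthogonal to η, or V⁺(z) < ∞ holds for all z ∈ ℝⁿ orthogonal to η (or both). -/
/-!
The last `k` rows of `A` are `-diag(s) (X_m' X_m)⁻¹ X_m'`, and `X_m' η = γ`, so the corresponding
block of `A c` is `-‖η‖⁻² diag(s) (X_m' X_m)⁻¹ γ`, a nonzero vector since `diag(s)` and the Gram
matrix are invertible and `γ ≠ 0`. Hence some coordinate `(A c)_i` is negative, making `V⁻(z)` a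
maximum over a nonempty set of reals for every `z`, or one is positive, and then the same holds
for `V⁺(z)`.
-/

open Matrix

namespace Matrix

variable {K m n : Type*} [Fintype n] [DecidableEq n]

theorem isUnit_of_rank_eq_card [Field K] {M : Matrix n n K} (h : M.rank = Fintype.card n) :
    IsUnit M := by
  rw [← mulVec_surjective_iff_isUnit, ← coe_mulVecLin, ← LinearMap.range_eq_top]
  exact Submodule.eq_top_of_finrank_eq (by simpa [rank] using h)

theorem isUnit_transpose_mul_self_of_rank_eq_card [Fintype m] [Field K] [LinearOrder K]
    [IsStrictOrderedRing K] {X : Matrix m n K} (h : X.rank = Fintype.card n) :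
    IsUnit (Xᵀ * X) :=
  isUnit_of_rank_eq_card (by rw [rank_transpose_mul_self, h])

theorem transpose_mulVec_mul_inv_transpose_mul_self_mulVec [Fintype m] [CommRing K]
    {X : Matrix m n K} (hX : IsUnit (Xᵀ * X)) (γ : n → K) :
    Xᵀ *ᵥ ((X * (Xᵀ * X)⁻¹) *ᵥ γ) = γ := by
  rw [mulVec_mulVec, ← Matrix.mul_assoc,
    mul_nonsing_inv _ ((isUnit_iff_isUnit_det _).mp hX), one_mulVec]

theorem mulVec_ne_zero_of_isUnit [Field K] {M : Matrix n n K} (hM : IsUnit M) {v : n → K}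
    (hv : v ≠ 0) : M *ᵥ v ≠ 0 :=
  ((mulVec_injective_iff_isUnit.mpr hM).ne_iff' (mulVec_zero M)).mpr hv

end Matrix

namespace EReal

variable {ι : Type*}

theorem bot_lt_biSup_coe {S : Set ι} (hS : S.Nonempty) (g : ι → ℝ) :
    ⊥ < ⨆ i ∈ S, (g i : EReal) :=
  let ⟨i, hi⟩ := hS
  (bot_lt_coe (g i)).trans_le (le_biSup (fun i => (g i : EReal)) hi)

theorem biInf_coe_lt_top {S : Set ι} (hS : S.Nonempty) (g : ι → ℝ) :
    ⨅ i ∈ S, (g i : EReal) < ⊤ :=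
  let ⟨i, hi⟩ := hS
  (biInf_le (fun i => (g i : EReal)) hi).trans_lt (coe_lt_top (g i))

theorem bot_lt_biSup_neg_or_biInf_pos_lt_top {v : ι → ℝ} (hv : v ≠ 0) :
    (∀ g : ι → ℝ, ⊥ < ⨆ i ∈ {i | v i < 0}, (g i : EReal)) ∨
      ∀ g : ι → ℝ, ⨅ i ∈ {i | 0 < v i}, (g i : EReal) < ⊤ := by
  obtain ⟨i, hi⟩ := Function.ne_iff.mp hv
  rcases hi.lt_or_gt with hneg | hpos
  · exact Or.inl (bot_lt_biSup_coe ⟨i, hneg⟩)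
  · exact Or.inr (biInf_coe_lt_top ⟨i, hpos⟩)

end EReal

theorem stmt_15_general (n p k : ℕ) (lam : ℝ)
    (Xm : Matrix (Fin n) (Fin k) ℝ)
    (hrank : Xm.rank = k)
    (Xmc : Matrix (Fin n) (Fin (p - k)) ℝ)
    (s : Fin k → ℝ) (hs : ∀ i, s i = 1 ∨ s i = -1)
    (γ : Fin k → ℝ) (hγ : γ ≠ 0)
    (η c : Fin n → ℝ)
    (hη : η = (Xm * (Xmᵀ * Xm)⁻¹) *ᵥ γ)
    (hc : c = (∑ i, η i ^ 2)⁻¹ • η)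
    (A : Matrix ((Fin (p - k) ⊕ Fin (p - k)) ⊕ Fin k) (Fin n) ℝ)
    (hA : A = Matrix.fromRows
      (Matrix.fromRows
        ((1 / lam) • (Xmcᵀ * (1 - Xm * (Xmᵀ * Xm)⁻¹ * Xmᵀ)))
        (-((1 / lam) • (Xmcᵀ * (1 - Xm * (Xmᵀ * Xm)⁻¹ * Xmᵀ)))))
      (-(Matrix.diagonal s * (Xmᵀ * Xm)⁻¹ * Xmᵀ)))
    (bv : (Fin (p - k) ⊕ Fin (p - k)) ⊕ Fin k → ℝ)
    (Vminus Vplus : (Fin n → ℝ) → EReal)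
    (hVminus : ∀ z, Vminus z =
      ⨆ i ∈ {i | (A *ᵥ c) i < 0}, (((bv i - (A *ᵥ z) i) / (A *ᵥ c) i : ℝ) : EReal))
    (hVplus : ∀ z, Vplus z =
      ⨅ i ∈ {i | 0 < (A *ᵥ c) i}, (((bv i - (A *ᵥ z) i) / (A *ᵥ c) i : ℝ) : EReal)) :
    (∀ z : Fin n → ℝ, z ⬝ᵥ η = 0 → ⊥ < Vminus z) ∨
      (∀ z : Fin n → ℝ, z ⬝ᵥ η = 0 → Vplus z < ⊤) := by
  have hG : IsUnit (Xmᵀ * Xm) :=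
    isUnit_transpose_mul_self_of_rank_eq_card (by rw [hrank, Fintype.card_fin])
  have hXη : Xmᵀ *ᵥ η = γ := hη ▸ transpose_mulVec_mul_inv_transpose_mul_self_mulVec hG γ
  have hη0 : η ≠ 0 := by
    rintro rfl
    exact hγ (by rw [← hXη, mulVec_zero])
  have hnorm : (∑ i, η i ^ 2)⁻¹ ≠ 0 :=
    inv_ne_zero (by simpa only [dotProduct, sq] using dotProduct_self_eq_zero.not.mpr hη0)
  have hD : IsUnit (diagonal s) :=
    isUnit_diagonal.mpr (Pi.isUnit_iff.mpr fun i => by rcases hs i with h | h <;> simp [h])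
  have hlower : (-(diagonal s * (Xmᵀ * Xm)⁻¹ * Xmᵀ)) *ᵥ c ≠ 0 := by
    rw [hc, mulVec_smul, neg_mulVec, ← mulVec_mulVec, hXη, smul_ne_zero_iff, neg_ne_zero]
    exact ⟨hnorm, mulVec_ne_zero_of_isUnit (hD.mul (isUnit_nonsing_inv_iff.mpr hG)) hγ⟩
  have hAc : A *ᵥ c ≠ 0 := by
    rw [hA, fromRows_mulVec]
    exact fun h => hlower (funext fun j => congrFun h (Sum.inr j))
  rcases EReal.bot_lt_biSup_neg_or_biInf_pos_lt_top hAc with h | h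
  · exact Or.inl fun z _ => hVminus z ▸ h _
  · exact Or.inr fun z _ => hVplus z ▸ h _

/-- The polyhedral-method statement for the Lasso selection event: with
`A = A_{m,s}`, `b = b_{m,s}` the polyhedral description of the event
`{m̂ = m, ŝ = s}`, `η = X_m (X_m' X_m)⁻¹ γ` (for `γ ≠ 0`), `c = η/‖η‖²`, and
`V⁻(z) = max({(b − A z)_i/(A c)_i : (A c)_i < 0} ∪ {−∞})`,
`V⁺(z) = min({(b − A z)_i/(A c)_i : (A c)_i > 0} ∪ {∞})`:
either `V⁻(z) > −∞` for all `z` orthogonal to `η`, or `V⁺(z) < ∞` for all `z`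
orthogonal to `η` (or both). -/
theorem stmt_15 (n p k : ℕ) (X : Matrix (Fin n) (Fin p) ℝ) (lam : ℝ) (hlam : 0 < lam)
    (m : Finset (Fin p)) (hm : m.Nonempty) (hcard : m.card = k)
    (hcc : mᶜ.card = p - k)
    (Xm : Matrix (Fin n) (Fin k) ℝ)
    (hXm : Xm = fun i j => X i (m.orderIsoOfFin hcard j))
    (hrank : Xm.rank = k)
    (Xmc : Matrix (Fin n) (Fin (p - k)) ℝ)
    (hXmc : Xmc = fun i j => X i ((mᶜ).orderIsoOfFin hcc j))
    (s : Fin k → ℝ) (hs : ∀ i, s i = 1 ∨ s i = -1)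
    (γ : Fin k → ℝ) (hγ : γ ≠ 0)
    (η c : Fin n → ℝ)
    (hη : η = (Xm * (Xmᵀ * Xm)⁻¹) *ᵥ γ)
    (hc : c = (∑ i, η i ^ 2)⁻¹ • η)
    (A : Matrix ((Fin (p - k) ⊕ Fin (p - k)) ⊕ Fin k) (Fin n) ℝ)
    (hA : A = Matrix.fromRows
      (Matrix.fromRows
        ((1 / lam) • (Xmcᵀ * (1 - Xm * (Xmᵀ * Xm)⁻¹ * Xmᵀ)))
        (-((1 / lam) • (Xmcᵀ * (1 - Xm * (Xmᵀ * Xm)⁻¹ * Xmᵀ)))))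
      (-(Matrix.diagonal s * (Xmᵀ * Xm)⁻¹ * Xmᵀ)))
    (bv : (Fin (p - k) ⊕ Fin (p - k)) ⊕ Fin k → ℝ)
    (hbv : bv = Sum.elim
      (Sum.elim
        (fun i => 1 - ((Xmcᵀ * Xm * (Xmᵀ * Xm)⁻¹) *ᵥ s) i)
        (fun i => 1 + ((Xmcᵀ * Xm * (Xmᵀ * Xm)⁻¹) *ᵥ s) i))
      (fun i => -lam * ((Matrix.diagonal s * (Xmᵀ * Xm)⁻¹) *ᵥ s) i))
    (Vminus Vplus : (Fin n → ℝ) → EReal)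
    (hVminus : ∀ z, Vminus z =
      ⨆ i ∈ {i | (A *ᵥ c) i < 0}, (((bv i - (A *ᵥ z) i) / (A *ᵥ c) i : ℝ) : EReal))
    (hVplus : ∀ z, Vplus z =
      ⨅ i ∈ {i | 0 < (A *ᵥ c) i}, (((bv i - (A *ᵥ z) i) / (A *ᵥ c) i : ℝ) : EReal)) :
    (∀ z : Fin n → ℝ, z ⬝ᵥ η = 0 → ⊥ < Vminus z) ∨
      (∀ z : Fin n → ℝ, z ⬝ᵥ η = 0 → Vplus z < ⊤) :=
  stmt_15_general n p k lam Xm hrank Xmc s hs γ hγ η c hη hc A hA bv Vminus Vplus hVminus hVplus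
end

section
/- Suppose b_K < ∞ and write b = b_K. Fix θ ∈ ℝ and let G(κ) = inf{w ∈ ℝ : F^T_{θ,ς²}(w) ≥ κ} denote the κ-quantile function of TN(θ, ς², T). Then, as κ increases to 1, (b − G(κ))·φ((b−θ)/ς) / [(1−κ)·ς·P(V ∈ T)] → 1, where V ~ N(θ, ς²); equivalently, b − G(κ) = (1−κ)·ς·P(V ∈ T)/φ((b−θ)/ς)·(1 + o(1)) as κ ↗ 1. -/
/-!
Near its right end `β = b_K`, the set `T` coincides with an interval `(c, β)`, so for
`w ∈ [c, β]` the upper tail of the truncated cdf is `1 - F w = (∫ x in w..β, ρ x) / P(V ∈ T)`,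
`ρ` being the density of `N(θ, ς²)`. As `F` is continuous and monotone, `F < 1` on `(-∞, β)` and
`F β = 1`, the quantile satisfies `F (G κ) = κ` and `G κ → β⁻`. Hence
`(1 - κ) P(V ∈ T) = ∫ x in G κ..β, ρ x ∼ (β - G κ) ρ β` by the fundamental theorem of calculus,
and `ς ρ β = φ ((β - θ) / ς)`.
-/

open Filter MeasureTheory ProbabilityTheory Set

/-- The cdf of the normal distribution with mean `θ` and variance `ς²`, truncated to the
set `T`: `F^T_{θ,ς²}(w) = P(V ≤ w ∧ V ∈ T) / P(V ∈ T)` for `V ~ N(θ, ς²)`. -/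
noncomputable def truncNormalCDF (ς : ℝ) (T : Set ℝ) (θ w : ℝ) : ℝ :=
  ((gaussianReal θ (Real.toNNReal (ς ^ 2))) (Set.Iic w ∩ T)).toReal /
    ((gaussianReal θ (Real.toNNReal (ς ^ 2))) T).toReal

/-- The standard normal density `φ(t) = (2π)^{−1/2} exp(−t²/2)`. -/
noncomputable def stdNormalPDF (t : ℝ) : ℝ :=
  (Real.sqrt (2 * Real.pi))⁻¹ * Real.exp (-(t ^ 2) / 2)

open Topology

section IntervalUnion

variable {K : ℕ} {a b : ℕ → EReal}

lemma measurableSet_iUnion_Ioo :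
    MeasurableSet (⋃ i ∈ Finset.range K, {x : ℝ | a i < (x : EReal) ∧ (x : EReal) < b i}) :=
  Finset.measurableSet_biUnion _ fun _ _ => measurable_coe_real_ereal measurableSet_Ioo

lemma right_lt_left_of_lt (hab : ∀ i < K, a i < b i) (hba : ∀ i, i + 1 < K → b i < a (i + 1))
    {i j : ℕ} (hij : i < j) (hj : j < K) : b i < a j := by
  induction j, hij using Nat.le_induction with
  | base => exact hba i hj
  | succ j hij ih => exact (ih (by omega)).trans ((hab j (by omega)).trans (hba j hj))

lemma iUnion_Ioo_subset_Iio (hab : ∀ i < K, a i < b i)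
    (hba : ∀ i, i + 1 < K → b i < a (i + 1)) {β : ℝ} (hβ : b (K - 1) = β) :
    (⋃ i ∈ Finset.range K, {x : ℝ | a i < (x : EReal) ∧ (x : EReal) < b i}) ⊆ Iio β := by
  intro x hx
  simp only [mem_iUnion, Finset.mem_range, mem_ofPred_eq, exists_prop] at hx
  obtain ⟨i, hi, -, hxb⟩ := hx
  have hbi : b i ≤ b (K - 1) := by
    rcases (Nat.le_sub_one_of_lt hi).lt_or_eq with h | rfl
    · exact ((right_lt_left_of_lt hab hba h (by omega)).trans (hab _ (by omega))).le
    · rfl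
  rw [hβ] at hbi
  exact EReal.coe_lt_coe_iff.mp (hxb.trans_le hbi)

lemma exists_iUnion_Ioo_inter_Ioi_eq (hab : ∀ i < K, a i < b i)
    (hba : ∀ i, i + 1 < K → b i < a (i + 1)) (hK : 1 ≤ K) {β : ℝ} (hβ : b (K - 1) = β) :
    ∃ c < β, ∀ w, c ≤ w →
      (⋃ i ∈ Finset.range K, {x : ℝ | a i < (x : EReal) ∧ (x : EReal) < b i}) ∩ Ioi w =
        Ioo w β := by
  obtain ⟨c, hac, hcb⟩ := EReal.exists_between_coe_real (hab (K - 1) (by omega))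
  rw [hβ] at hcb
  refine ⟨c, EReal.coe_lt_coe_iff.mp hcb, fun w hcw => ?_⟩
  ext x
  simp only [mem_inter_iff, mem_iUnion, Finset.mem_range, mem_ofPred_eq, exists_prop, mem_Ioi,
    mem_Ioo]
  constructor
  · rintro ⟨⟨i, hi, -, hxb⟩, hwx⟩
    refine ⟨hwx, ?_⟩
    rcases (Nat.le_sub_one_of_lt hi).lt_or_eq with h | rfl
    · have hxc : (x : EReal) < c :=
        hxb.trans ((right_lt_left_of_lt hab hba h (by omega)).trans hac)
      exact absurd (EReal.coe_lt_coe_iff.mp hxc) (by linarith)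
    · rw [hβ] at hxb
      exact EReal.coe_lt_coe_iff.mp hxb
  · rintro ⟨hwx, hxβ⟩
    refine ⟨⟨K - 1, by omega, hac.trans (EReal.coe_lt_coe_iff.mpr (by linarith)), ?_⟩, hwx⟩
    rw [hβ]
    exact EReal.coe_lt_coe_iff.mpr hxβ

end IntervalUnion

noncomputable def quantile (F : ℝ → ℝ) (κ : ℝ) : ℝ :=
  sInf {w | κ ≤ F w}

section Quantile

variable {F : ℝ → ℝ}

lemma map_quantile_eq (hF : Continuous F) (hFm : Monotone F) {u v κ : ℝ} (hu : F u < κ)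
    (hv : κ ≤ F v) : F (quantile F κ) = κ ∧ u < quantile F κ ∧ quantile F κ ≤ v := by
  have hbdd : BddBelow {w | κ ≤ F w} :=
    ⟨u, fun w hw => (hFm.reflect_lt (hu.trans_le hw)).le⟩
  obtain ⟨x, hx, hFx⟩ := intermediate_value_Icc (hFm.reflect_lt (hu.trans_le hv)).le
    hF.continuousOn ⟨hu.le, hv⟩
  have hle : quantile F κ ≤ x := csInf_le hbdd hFx.ge
  have hmem : κ ≤ F (quantile F κ) :=
    (isClosed_le continuous_const hF).csInf_mem ⟨x, hFx.ge⟩ hbdd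
  exact ⟨le_antisymm ((hFm hle).trans hFx.le) hmem, hFm.reflect_lt (hu.trans_le hmem),
    hle.trans hx.2⟩

lemma quantile_mem_Ioo (hF : Continuous F) (hFm : Monotone F) {β w κ : ℝ} (hβ : F β = 1)
    (hw : F w < κ) (hκ : κ < 1) : quantile F κ ∈ Ioo w β ∧ F (quantile F κ) = κ := by
  obtain ⟨hFq, hwq, hqβ⟩ := map_quantile_eq hF hFm hw (hβ ▸ hκ.le)
  refine ⟨⟨hwq, hqβ.lt_of_ne ?_⟩, hFq⟩
  rintro rfl
  linarith

lemma tendsto_quantile_nhdsLT (hF : Continuous F) (hFm : Monotone F) {β : ℝ} (hβ : F β = 1)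
    (hlt : ∀ w < β, F w < 1) : Tendsto (quantile F) (𝓝[<] 1) (𝓝[<] β) := by
  refine (nhdsLT_basis β).tendsto_right_iff.mpr fun w hw => ?_
  filter_upwards [Ioo_mem_nhdsLT (hlt w hw)] with κ hκ
  exact (quantile_mem_Ioo hF hFm hβ hκ.1 hκ.2).1

end Quantile

lemma tendsto_intervalIntegral_div_sub_nhdsLT {f : ℝ → ℝ} (hf : Continuous f) (β : ℝ) :
    Tendsto (fun w => (∫ x in w..β, f x) / (β - w)) (𝓝[<] β) (𝓝 (f β)) := by
  have hderiv := intervalIntegral.integral_hasDerivAt_left (hf.intervalIntegrable β β)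
      (hf.stronglyMeasurableAtFilter _ _) hf.continuousAt
  have := (hasDerivAt_iff_tendsto_slope.mp hderiv).neg.mono_left
    (nhdsWithin_mono _ fun x (hx : x < β) => hx.ne)
  rw [neg_neg] at this
  refine this.congr fun w => ?_
  rw [slope_def_field, intervalIntegral.integral_same, sub_zero, ← div_neg, neg_sub]

lemma MeasureTheory.Integrable.continuous_integral_Iic {f : ℝ → ℝ} (hf : Integrable f) :
    Continuous fun w => ∫ x in Iic w, f x := by
  have h : ∀ w, ∫ x in Iic w, f x = (∫ x in Iic 0, f x) + ∫ x in 0..w, f x := fun w => by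
    rw [← intervalIntegral.integral_Iic_sub_Iic hf.integrableOn hf.integrableOn]
    ring
  exact (continuous_const.add (hf.continuous_primitive 0)).congr fun w => (h w).symm

lemma continuous_gaussianPDFReal (θ : ℝ) (v : NNReal) : Continuous (gaussianPDFReal θ v) := by
  rw [gaussianPDFReal_def]
  fun_prop

lemma toReal_gaussianReal_eq_integral (θ : ℝ) {v : NNReal} (hv : v ≠ 0) (s : Set ℝ) :
    (gaussianReal θ v s).toReal = ∫ x in s, gaussianPDFReal θ v x := by
  rw [gaussianReal_apply_eq_integral θ hv, ENNReal.toReal_ofReal]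
  exact integral_nonneg (gaussianPDFReal_nonneg θ v)

lemma toReal_gaussianReal_Ioo (θ : ℝ) {v : NNReal} (hv : v ≠ 0) {w β : ℝ} (hwβ : w ≤ β) :
    (gaussianReal θ v (Ioo w β)).toReal = ∫ x in w..β, gaussianPDFReal θ v x := by
  rw [toReal_gaussianReal_eq_integral θ hv, ← integral_Ioc_eq_integral_Ioo,
    intervalIntegral.integral_of_le hwβ]

lemma intervalIntegral_gaussianPDFReal_pos (θ : ℝ) {v : NNReal} (hv : v ≠ 0) {w β : ℝ}
    (hwβ : w < β) : 0 < ∫ x in w..β, gaussianPDFReal θ v x :=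
  intervalIntegral.intervalIntegral_pos_of_pos (integrable_gaussianPDFReal θ v).intervalIntegrable
    (gaussianPDFReal_pos θ v · hv) hwβ

lemma stdNormalPDF_div_eq {ς : ℝ} (hς : 0 < ς) (θ x : ℝ) :
    stdNormalPDF ((x - θ) / ς) = ς * gaussianPDFReal θ (ς ^ 2).toNNReal x := by
  rw [gaussianPDFReal_def, Real.coe_toNNReal _ (sq_nonneg ς), Real.sqrt_mul (by positivity),
    Real.sqrt_sq hς.le, stdNormalPDF, div_pow]
  field_simp

lemma toNNReal_sq_ne_zero {ς : ℝ} (hς : ς ≠ 0) : (ς ^ 2).toNNReal ≠ 0 :=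
  (Real.toNNReal_pos.mpr (by positivity)).ne'

lemma truncNormalCDF_mono (ς θ : ℝ) (T : Set ℝ) : Monotone (truncNormalCDF ς T θ) :=
  fun _ _ h => div_le_div_of_nonneg_right (ENNReal.toReal_mono (measure_ne_top _ _)
    (measure_mono (inter_subset_inter_left T (Iic_subset_Iic.mpr h)))) ENNReal.toReal_nonneg

section TruncNormal

variable {ς θ : ℝ} {T : Set ℝ}

lemma continuous_truncNormalCDF (hς : ς ≠ 0) (hT : MeasurableSet T) :
    Continuous (truncNormalCDF ς T θ) := by
  have h : ∀ w, truncNormalCDF ς T θ w =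
      (∫ x in Iic w, T.indicator (gaussianPDFReal θ (ς ^ 2).toNNReal) x) /
        (gaussianReal θ (ς ^ 2).toNNReal T).toReal := fun w => by
    rw [truncNormalCDF, toReal_gaussianReal_eq_integral θ (toNNReal_sq_ne_zero hς),
      setIntegral_indicator hT]
  exact (((integrable_gaussianPDFReal θ _).indicator hT).continuous_integral_Iic.div_const
    _).congr fun w => (h w).symm

lemma truncNormalCDF_eq_one {w : ℝ} (hT : T ⊆ Iic w)
    (hμT : (gaussianReal θ (ς ^ 2).toNNReal T).toReal ≠ 0) : truncNormalCDF ς T θ w = 1 := by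
  rw [truncNormalCDF, inter_eq_right.mpr hT, div_self hμT]

lemma one_sub_truncNormalCDF (hμT : (gaussianReal θ (ς ^ 2).toNNReal T).toReal ≠ 0) (w : ℝ) :
    1 - truncNormalCDF ς T θ w =
      (gaussianReal θ (ς ^ 2).toNNReal (T ∩ Ioi w)).toReal /
        (gaussianReal θ (ς ^ 2).toNNReal T).toReal := by
  have hsum : (gaussianReal θ (ς ^ 2).toNNReal T).toReal =
      (gaussianReal θ (ς ^ 2).toNNReal (Iic w ∩ T)).toReal +
        (gaussianReal θ (ς ^ 2).toNNReal (T ∩ Ioi w)).toReal := by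
    rw [← ENNReal.toReal_add (measure_ne_top _ _) (measure_ne_top _ _), inter_comm, ← compl_Iic,
      ← Set.sdiff_eq, measure_inter_add_sdiff _ measurableSet_Iic]
  rw [truncNormalCDF, eq_div_iff hμT, sub_mul, div_mul_cancel₀ _ hμT, hsum]
  ring

lemma one_sub_truncNormalCDF_eq_integral (hς : ς ≠ 0)
    (hμT : (gaussianReal θ (ς ^ 2).toNNReal T).toReal ≠ 0) {w β : ℝ}
    (hT : T ∩ Ioi w = Ioo w β) (hwβ : w ≤ β) :
    1 - truncNormalCDF ς T θ w =
      (∫ x in w..β, gaussianPDFReal θ (ς ^ 2).toNNReal x) /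
        (gaussianReal θ (ς ^ 2).toNNReal T).toReal := by
  rw [one_sub_truncNormalCDF hμT, hT, toReal_gaussianReal_Ioo θ (toNNReal_sq_ne_zero hς) hwβ]

lemma toReal_gaussianReal_pos_of_inter_Ioi_eq (hς : ς ≠ 0) {w β : ℝ}
    (hT : T ∩ Ioi w = Ioo w β) (hwβ : w < β) :
    0 < (gaussianReal θ (ς ^ 2).toNNReal T).toReal := by
  refine (intervalIntegral_gaussianPDFReal_pos θ (toNNReal_sq_ne_zero hς) hwβ).trans_le ?_
  rw [← toReal_gaussianReal_Ioo θ (toNNReal_sq_ne_zero hς) hwβ.le, ← hT]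
  exact ENNReal.toReal_mono (measure_ne_top _ _) (measure_mono inter_subset_left)

lemma truncNormalCDF_lt_one (hς : ς ≠ 0) {c β : ℝ} (hcβ : c < β)
    (hT : ∀ w, c ≤ w → T ∩ Ioi w = Ioo w β) {w : ℝ} (hwβ : w < β) :
    truncNormalCDF ς T θ w < 1 := by
  have hμT := toReal_gaussianReal_pos_of_inter_Ioi_eq (θ := θ) hς (hT c le_rfl) hcβ
  have h := one_sub_truncNormalCDF_eq_integral hς hμT.ne' (hT (max w c) (le_max_right w c))
    (max_le hwβ.le hcβ.le)
  have := div_pos (intervalIntegral_gaussianPDFReal_pos θ (toNNReal_sq_ne_zero hς)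
    (max_lt hwβ hcβ)) hμT
  linarith [truncNormalCDF_mono ς θ T (le_max_left w c)]

end TruncNormal

/-- Suppose `b_K < ∞`, write `b` for it, fix `θ ∈ ℝ`, and let
`G(κ) = inf {w : F^T_{θ,ς²}(w) ≥ κ}` be the `κ`-quantile function of `TN(θ,ς²,T)`.
Then `(b − G(κ))·φ((b−θ)/ς) / ((1−κ)·ς·P(V ∈ T)) → 1` as `κ ↗ 1`, where
`V ~ N(θ,ς²)`. -/
theorem stmt_17
    (ς : ℝ) (hς : 0 < ς) (K : ℕ) (hK : 1 ≤ K) (a b : ℕ → EReal)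
    (hab : ∀ i < K, a i < b i) (hba : ∀ i, i + 1 < K → b i < a (i + 1))
    (T : Set ℝ)
    (hT : T = ⋃ i ∈ Finset.range K, {x : ℝ | a i < (x : EReal) ∧ (x : EReal) < b i})
    (hbK : b (K - 1) ≠ ⊤) (θ : ℝ) (G : ℝ → ℝ)
    (hG : ∀ κ : ℝ, G κ = sInf {w : ℝ | κ ≤ truncNormalCDF ς T θ w}) :
    Tendsto
      (fun κ : ℝ =>
        ((b (K - 1)).toReal - G κ) * stdNormalPDF (((b (K - 1)).toReal - θ) / ς) /
          ((1 - κ) * ς * ((gaussianReal θ (Real.toNNReal (ς ^ 2))) T).toReal))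
      (nhdsWithin 1 (Set.Iio 1)) (nhds 1) := by
  set β := (b (K - 1)).toReal
  have hβ : b (K - 1) = β :=
    (EReal.coe_toReal hbK (bot_le.trans_lt (hab _ (by omega))).ne').symm
  obtain ⟨c, hcβ, hTc⟩ := exists_iUnion_Ioo_inter_Ioi_eq hab hba hK hβ
  have hTβ := iUnion_Ioo_subset_Iio hab hba hβ
  rw [← hT] at hTc hTβ
  set F := truncNormalCDF ς T θ
  set ρ := gaussianPDFReal θ (ς ^ 2).toNNReal with hρ
  have hμT := toReal_gaussianReal_pos_of_inter_Ioi_eq (θ := θ) hς.ne' (hTc c le_rfl) hcβ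
  have hFβ : F β = 1 := truncNormalCDF_eq_one (hTβ.trans Iio_subset_Iic_self) hμT.ne'
  have hFlt : ∀ w < β, F w < 1 := fun w => truncNormalCDF_lt_one hς.ne' hcβ hTc
  have hFc : Continuous F := continuous_truncNormalCDF hς.ne' (hT ▸ measurableSet_iUnion_Ioo)
  have hFm : Monotone F := truncNormalCDF_mono ς θ T
  have hslope : Tendsto (fun w => ρ β / ((∫ x in w..β, ρ x) / (β - w))) (𝓝[<] β) (𝓝 1) := by
    have hρβ : ρ β ≠ 0 := (gaussianPDFReal_pos θ _ β (toNNReal_sq_ne_zero hς.ne')).ne'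
    rw [← div_self hρβ]
    exact tendsto_const_nhds.div
      (tendsto_intervalIntegral_div_sub_nhdsLT (continuous_gaussianPDFReal θ _) β) hρβ
  rw [show G = quantile F from funext hG]
  refine (hslope.comp (tendsto_quantile_nhdsLT hFc hFm hFβ hFlt)).congr' ?_
  filter_upwards [Ioo_mem_nhdsLT (hFlt c hcβ)] with κ hκ
  obtain ⟨⟨hcq, hqβ⟩, hFq⟩ := quantile_mem_Ioo hFc hFm hFβ hκ.1 hκ.2
  have h1κ := one_sub_truncNormalCDF_eq_integral hς.ne' hμT.ne' (hTc _ hcq.le) hqβ.le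
  rw [show truncNormalCDF ς T θ (quantile F κ) = κ from hFq] at h1κ
  have hΨ : 0 < ∫ x in quantile F κ..β, ρ x :=
    intervalIntegral_gaussianPDFReal_pos θ (toNNReal_sq_ne_zero hς.ne') hqβ
  rw [Function.comp_apply, stdNormalPDF_div_eq hς, h1κ, ← hρ]
  field_simp
end
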